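/- The band-restricted DP dominates the true edit distance: for all 0 ≤ i ≤ n and 0 ≤ j ≤ m, D_t(i,j) ≥ d(A.take i, B.take j) (as elements of ℕ∞, coercing the edit distance). -/

import Mathlib

/-- Costs for the Levenshtein distance (removed from Mathlib; restored with its old meaning). -/
structure Levenshtein.Cost (α β δ : Type*) where
  delete : α → δ
  insert : β → δ
  substitute : α → β → δ

/-- The default unit costs, as in the old Mathlib. -/
def Levenshtein.defaultCost {α : Type*} [DecidableEq α] : Levenshtein.Cost α α ℕ where
  delete _ := 1
  insert _ := 1
  substitute a b := if a = b then 0 else 1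

/-- The Levenshtein distance, by the recurrence the old Mathlib definition satisfied. -/
def levenshtein {α β δ : Type*} [AddZeroClass δ] [Min δ] (C : Levenshtein.Cost α β δ) :
    List α → List β → δ
  | [], [] => 0
  | x :: xs, [] => C.delete x + levenshtein C xs []
  | [], y :: ys => C.insert y + levenshtein C [] ys
  | x :: xs, y :: ys =>
      min (C.delete x + levenshtein C xs (y :: ys))
        (min (C.insert y + levenshtein C (x :: xs) ys) (C.substitute x y + levenshtein C xs ys))

/-- The unit-cost Levenshtein edit distance. -/
def editDist {α : Type*} [DecidableEq α] (A B : List α) : ℕ :=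
  levenshtein Levenshtein.defaultCost A B

/-- The band-restricted DP table `D_t` with values in `ℕ∞`: entries outside the diagonal band
`|i - j| ≤ t` are `⊤`, `D_t(0,0) = 0`, and otherwise `D_t(i,j)` is the minimum of the
applicable terms (diagonal with substitution cost, vertical `+1`, horizontal `+1`). -/
noncomputable def bandDP {α : Type*} [DecidableEq α] (A B : List α) (t : ℕ) : ℕ → ℕ → ℕ∞
  | i, j =>
    if (t : ℤ) < |(i : ℤ) - (j : ℤ)| then ⊤
    else
      match i, j with
      | 0, 0 => 0
      | i + 1, 0 => bandDP A B t i 0 + 1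
      | 0, j + 1 => bandDP A B t 0 j + 1
      | i + 1, j + 1 =>
          min (bandDP A B t i j + (if A[i]? = B[j]? then (0 : ℕ∞) else 1))
            (min (bandDP A B t i (j + 1) + 1) (bandDP A B t (i + 1) j + 1))
  termination_by i j => i + j

/-! Each of the three DP moves appends at most one character to each prefix, and the edit distance
is subadditive under concatenation, so the cost of the move bounds the growth of the edit distance;
out-of-band entries are `⊤` and bound everything. Writing `A.take (i + 1) = A.take i ++ A[i]?.toList`
treats all indices alike, also those past the end of a list. -/

section Levenshtein

open Levenshtein

variable {α β δ : Type*}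

section ConsBounds

variable [AddZeroClass δ] [LinearOrder δ] (C : Cost α β δ)

theorem levenshtein_cons_left_le (x : α) (xs : List α) (ys : List β) :
    levenshtein C (x :: xs) ys ≤ C.delete x + levenshtein C xs ys := by
  cases ys with
  | nil => rw [levenshtein]
  | cons y ys => rw [levenshtein]; exact min_le_left _ _

theorem levenshtein_cons_right_le (xs : List α) (y : β) (ys : List β) :
    levenshtein C xs (y :: ys) ≤ C.insert y + levenshtein C xs ys := by
  cases xs with
  | nil => rw [levenshtein]
  | cons x xs => rw [levenshtein]; exact (min_le_right _ _).trans (min_le_left _ _)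

theorem levenshtein_cons_cons_le (x : α) (xs : List α) (y : β) (ys : List β) :
    levenshtein C (x :: xs) (y :: ys) ≤ C.substitute x y + levenshtein C xs ys := by
  rw [levenshtein]; exact (min_le_right _ _).trans (min_le_right _ _)

end ConsBounds

theorem levenshtein_append_le [AddMonoid δ] [LinearOrder δ] [AddLeftMono δ] [AddRightMono δ]
    (C : Cost α β δ) :
    ∀ (xs xs' : List α) (ys ys' : List β),
      levenshtein C (xs ++ xs') (ys ++ ys') ≤ levenshtein C xs ys + levenshtein C xs' ys'
  | [], xs', [], ys' => by rw [levenshtein, zero_add, List.nil_append, List.nil_append]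
  | x :: xs, xs', [], ys' => by
    rw [List.cons_append, levenshtein, add_assoc]
    calc levenshtein C (x :: (xs ++ xs')) ys'
        ≤ C.delete x + levenshtein C (xs ++ xs') ([] ++ ys') := levenshtein_cons_left_le C _ _ _
      _ ≤ _ := add_le_add_right (levenshtein_append_le C xs xs' [] ys') _
  | [], xs', y :: ys, ys' => by
    rw [List.cons_append, levenshtein, add_assoc]
    calc levenshtein C ([] ++ xs') (y :: (ys ++ ys'))
        ≤ C.insert y + levenshtein C ([] ++ xs') (ys ++ ys') := levenshtein_cons_right_le C _ _ _
      _ ≤ _ := add_le_add_right (levenshtein_append_le C [] xs' ys ys') _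
  | x :: xs, xs', y :: ys, ys' => by
    conv_rhs => rw [levenshtein, ← min_add_add_right, ← min_add_add_right, add_assoc, add_assoc,
      add_assoc]
    refine le_min ?_ (le_min ?_ ?_)
    · exact (levenshtein_cons_left_le C _ _ _).trans
        (add_le_add_right (levenshtein_append_le C xs xs' (y :: ys) ys') _)
    · exact (levenshtein_cons_right_le C _ _ _).trans
        (add_le_add_right (levenshtein_append_le C (x :: xs) xs' ys ys') _)
    · exact (levenshtein_cons_cons_le C _ _ _ _).trans
        (add_le_add_right (levenshtein_append_le C xs xs' ys ys') _)

end Levenshtein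

section EditDist

variable {α : Type*} [DecidableEq α]

theorem editDist_append_le (xs xs' ys ys' : List α) :
    editDist (xs ++ xs') (ys ++ ys') ≤ editDist xs ys + editDist xs' ys' :=
  levenshtein_append_le _ xs xs' ys ys'

theorem editDist_toList_nil_le (o : Option α) : editDist o.toList [] ≤ 1 := by
  cases o <;> simp [editDist, levenshtein, Levenshtein.defaultCost]

theorem editDist_nil_toList_le (o : Option α) : editDist [] o.toList ≤ 1 := by
  cases o <;> simp [editDist, levenshtein, Levenshtein.defaultCost]

theorem editDist_toList_toList_le (o o' : Option α) :
    editDist o.toList o'.toList ≤ if o = o' then 0 else 1 := by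
  cases o <;> cases o' <;> simp [editDist, levenshtein, Levenshtein.defaultCost]

variable (A B : List α) (i j : ℕ)

theorem editDist_take_succ_left_le :
    (editDist (A.take (i + 1)) (B.take j) : ℕ∞) ≤ editDist (A.take i) (B.take j) + 1 := by
  have h := editDist_append_le (A.take i) A[i]?.toList (B.take j) []
  rw [List.append_nil, ← List.take_add_one] at h
  exact_mod_cast h.trans (Nat.add_le_add_left (editDist_toList_nil_le _) _)

theorem editDist_take_succ_right_le :
    (editDist (A.take i) (B.take (j + 1)) : ℕ∞) ≤ editDist (A.take i) (B.take j) + 1 := by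
  have h := editDist_append_le (A.take i) [] (B.take j) B[j]?.toList
  rw [List.append_nil, ← List.take_add_one] at h
  exact_mod_cast h.trans (Nat.add_le_add_left (editDist_nil_toList_le _) _)

theorem editDist_take_succ_succ_le :
    (editDist (A.take (i + 1)) (B.take (j + 1)) : ℕ∞) ≤
      editDist (A.take i) (B.take j) + if A[i]? = B[j]? then 0 else 1 := by
  have h := editDist_append_le (A.take i) A[i]?.toList (B.take j) B[j]?.toList
  rw [← List.take_add_one, ← List.take_add_one] at h
  have h' := h.trans (Nat.add_le_add_left (editDist_toList_toList_le _ _) _)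
  split_ifs at h' ⊢ <;> exact_mod_cast h'

end EditDist

/-- The band-restricted DP dominates the true edit distance. -/
theorem bandDP_ge_editDist {α : Type*} [DecidableEq α] (A B : List α) (t : ℕ)
    (i j : ℕ) :
    (editDist (A.take i) (B.take j) : ℕ∞) ≤ bandDP A B t i j := by
  rw [bandDP.eq_def]
  dsimp only
  split_ifs
  · exact le_top
  · match i, j with
    | 0, 0 => simp [editDist, levenshtein]
    | i + 1, 0 =>
      exact (editDist_take_succ_left_le A B i 0).trans
        (add_le_add_left (bandDP_ge_editDist A B t i 0) _)
    | 0, j + 1 =>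
      exact (editDist_take_succ_right_le A B 0 j).trans
        (add_le_add_left (bandDP_ge_editDist A B t 0 j) _)
    | i + 1, j + 1 =>
      refine le_min ?_ (le_min ?_ ?_)
      · exact (editDist_take_succ_succ_le A B i j).trans
          (add_le_add_left (bandDP_ge_editDist A B t i j) _)
      · exact (editDist_take_succ_left_le A B i (j + 1)).trans
          (add_le_add_left (bandDP_ge_editDist A B t i (j + 1)) _)
      · exact (editDist_take_succ_right_le A B (i + 1) j).trans
          (add_le_add_left (bandDP_ge_editDist A B t (i + 1) j) _)
termination_by i + j
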